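/- Let M be an infinite, bounded, uniformly discrete metric space. Then there exist a > 0 and sequences (u_i)_{i∈ℕ} and (v_i)_{i∈ℕ} in M, with the points u_1, v_1, u_2, v_2, … pairwise distinct, such that a·(i−1)/i ≤ d(u_i, v_i) ≤ a·(i+1)/i for all i ∈ ℕ; min{d(u_i, p), d(v_i, p)} ≥ a·(i−1)/i for all i ∈ ℕ and all p ∈ {u_j, v_j : j > i}; and min{d(u_i, q), d(v_i, q)} ≥ a·(i−1)/(2i) for all i ∈ ℕ and all q ∈ M \ {u_i, v_i}. -/

import Mathlib

open Metric Set Filter NNReal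

noncomputable section

/-- The topological dual of a normed space, with its OLD Mathlib definition (topology of `E`
taken from its norm). -/
abbrev NormedSpace.Dual (𝕜 : Type*) [NontriviallyNormedField 𝕜] (E : Type*)
    [SeminormedAddCommGroup E] [NormedSpace 𝕜 E] : Type _ :=
  E →L[𝕜] 𝕜

namespace DeltaPaper

/-! ### Generic Banach space notions -/

variable {X : Type*} [NormedAddCommGroup X] [NormedSpace ℝ X]

/-- `x` is a Daugavet-point: every slice of the unit ball contains, for every `ε > 0`,
an element at distance at least `2 - ε` from `x`. -/
def IsDaugavetPoint (x : X) : Prop :=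
  ∀ (φ : NormedSpace.Dual ℝ X) (α : ℝ), ‖φ‖ = 1 → 0 < α → ∀ ε > 0,
    ∃ y : X, ‖y‖ ≤ 1 ∧ 1 - α < φ y ∧ 2 - ε ≤ ‖x - y‖

/-- `x` is a Δ-point: every slice of the unit ball containing `x` contains, for every
`ε > 0`, an element at distance at least `2 - ε` from `x`. -/
def IsDeltaPoint (x : X) : Prop :=
  ∀ (φ : NormedSpace.Dual ℝ X) (α : ℝ), ‖φ‖ = 1 → 0 < α → 1 - α < φ x → ∀ ε > 0,
    ∃ y : X, ‖y‖ ≤ 1 ∧ 1 - α < φ y ∧ 2 - ε ≤ ‖x - y‖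

/-- `x*` is a w*-Daugavet-point of the dual of `X`. -/
def IsWeakStarDaugavetPoint (f : NormedSpace.Dual ℝ X) : Prop :=
  ∀ (x : X) (α : ℝ), ‖x‖ = 1 → 0 < α → ∀ ε > 0,
    ∃ g : NormedSpace.Dual ℝ X, ‖g‖ ≤ 1 ∧ 1 - α < g x ∧ 2 - ε ≤ ‖f - g‖

/-- `x*` is a w*-Δ-point of the dual of `X`. -/
def IsWeakStarDeltaPoint (f : NormedSpace.Dual ℝ X) : Prop :=
  ∀ (x : X) (α : ℝ), ‖x‖ = 1 → 0 < α → 1 - α < f x → ∀ ε > 0,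
    ∃ g : NormedSpace.Dual ℝ X, ‖g‖ ≤ 1 ∧ 1 - α < g x ∧ 2 - ε ≤ ‖f - g‖

/-- `x` is a denting point of the unit ball: it lies in slices of the unit ball of
arbitrarily small diameter. -/
def IsDentingPoint (x : X) : Prop :=
  ‖x‖ ≤ 1 ∧ ∀ ε > 0, ∃ (φ : NormedSpace.Dual ℝ X) (α : ℝ), ‖φ‖ = 1 ∧ 0 < α ∧
    1 - α < φ x ∧ Metric.diam {y : X | ‖y‖ ≤ 1 ∧ 1 - α < φ y} < ε

/-- The Kuratowski measure of non-compactness of a set: the infimum of all `ε > 0`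
such that the set can be covered by finitely many sets of diameter less than `ε`. -/
def kuratowski {Y : Type*} [PseudoMetricSpace Y] (A : Set Y) : ℝ :=
  sInf {ε : ℝ | 0 < ε ∧ ∃ 𝒞 : Finset (Set Y), (A ⊆ ⋃ B ∈ 𝒞, B) ∧ ∀ B ∈ 𝒞, Metric.diam B < ε}

/-! ### The space of Lipschitz functions vanishing at a base point -/

variable {M : Type*} [PseudoMetricSpace M]

/-- The least Lipschitz constant of a function. -/
def lipConst (f : M → ℝ) : ℝ≥0 := sInf {K | LipschitzWith K f}

theorem lipschitzWith_lipConst {f : M → ℝ} (hf : ∃ K, LipschitzWith K f) :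
    LipschitzWith (lipConst f) f := by
  obtain ⟨K₀, hK₀⟩ := hf
  rw [lipschitzWith_iff_dist_le_mul]
  intro x y
  rcases le_or_gt (dist x y) 0 with h | h
  · have h0 : dist x y = 0 := le_antisymm h dist_nonneg
    have := hK₀.dist_le_mul x y
    rw [h0, mul_zero] at this ⊢
    exact this
  · rw [← div_le_iff₀ h]
    have hnn : 0 ≤ dist (f x) (f y) / dist x y := by positivity
    rw [← Real.coe_toNNReal _ hnn, NNReal.coe_le_coe]
    refine le_csInf ⟨K₀, hK₀⟩ ?_
    intro K hK
    rw [← NNReal.coe_le_coe, Real.coe_toNNReal _ hnn, div_le_iff₀ h]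
    exact hK.dist_le_mul x y

theorem lipConst_le {f : M → ℝ} {K : ℝ≥0} (hK : LipschitzWith K f) : lipConst f ≤ K :=
  csInf_le (OrderBot.bddBelow _) hK

theorem lipschitzWith_smul {f : M → ℝ} {K : ℝ≥0} (hK : LipschitzWith K f) (c : ℝ) :
    LipschitzWith (‖c‖₊ * K) (c • f) := by
  rw [lipschitzWith_iff_dist_le_mul] at *
  intro x y
  have : dist ((c • f) x) ((c • f) y) = ‖c‖ * dist (f x) (f y) := by
    simp only [Pi.smul_apply, smul_eq_mul, Real.dist_eq, ← mul_sub, abs_mul, Real.norm_eq_abs]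
  rw [this, NNReal.coe_mul, coe_nnnorm, mul_assoc]
  exact mul_le_mul_of_nonneg_left (hK x y) (norm_nonneg c)

variable (M) in
/-- The submodule of `M → ℝ` consisting of Lipschitz functions vanishing at the
base point `z`. -/
def Lip0 (z : M) : Submodule ℝ (M → ℝ) where
  carrier := {f | (∃ K, LipschitzWith K f) ∧ f z = 0}
  add_mem' := by
    rintro f g ⟨⟨K, hK⟩, hf0⟩ ⟨⟨L, hL⟩, hg0⟩
    exact ⟨⟨K + L, hK.add hL⟩, by simp [hf0, hg0]⟩
  zero_mem' := ⟨⟨0, LipschitzWith.const' 0⟩, rfl⟩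
  smul_mem' := by
    rintro c f ⟨⟨K, hK⟩, hf0⟩
    exact ⟨⟨‖c‖₊ * K, lipschitzWith_smul hK c⟩, by simp [hf0]⟩

variable {z : M}

instance : NormedAddCommGroup ↥(Lip0 M z) :=
  AddGroupNorm.toNormedAddCommGroup
    { toFun := fun f => ((lipConst (f : M → ℝ) : ℝ≥0) : ℝ)
      map_zero' := by
        have h0 : lipConst (0 : M → ℝ) = 0 :=
          le_antisymm (lipConst_le (by simpa using LipschitzWith.const' (0 : ℝ))) bot_le
        show ((lipConst ((0 : ↥(Lip0 M z)) : M → ℝ) : ℝ≥0) : ℝ) = 0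
        rw [show ((0 : ↥(Lip0 M z)) : M → ℝ) = 0 from rfl, h0, NNReal.coe_zero]
      add_le' := by
        intro f g
        have hf := lipschitzWith_lipConst f.2.1
        have hg := lipschitzWith_lipConst g.2.1
        have : lipConst ((f + g : ↥(Lip0 M z)) : M → ℝ) ≤
            lipConst (f : M → ℝ) + lipConst (g : M → ℝ) := by
          refine lipConst_le ?_
          have := hf.add hg
          exact this
        exact_mod_cast this
      neg' := by
        intro f
        show ((lipConst ((-f : ↥(Lip0 M z)) : M → ℝ) : ℝ≥0) : ℝ) = _
        rw [show ((-f : ↥(Lip0 M z)) : M → ℝ) = -(f : M → ℝ) from rfl]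
        unfold lipConst
        congr 2
        ext K
        exact ⟨fun hK => by simpa using hK.neg, fun hK => hK.neg⟩
      eq_zero_of_map_eq_zero' := by
        intro f hf
        replace hf : ((lipConst (f : M → ℝ) : ℝ≥0) : ℝ) = 0 := hf
        have h0 : lipConst (f : M → ℝ) = 0 := by exact_mod_cast hf
        have hl : LipschitzWith 0 (f : M → ℝ) := h0 ▸ lipschitzWith_lipConst f.2.1
        ext x
        have := hl.dist_le_mul x z
        simp only [NNReal.coe_zero, zero_mul] at this
        have hxz : (f : M → ℝ) x = (f : M → ℝ) z :=
          dist_le_zero.mp this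
        simpa [f.2.2] using hxz }

theorem Lip0.norm_def (f : ↥(Lip0 M z)) : ‖f‖ = ((lipConst (f : M → ℝ) : ℝ≥0) : ℝ) := rfl

theorem Lip0.lipschitzWith (f : ↥(Lip0 M z)) : LipschitzWith (lipConst (f : M → ℝ)) (f : M → ℝ) :=
  lipschitzWith_lipConst f.2.1

instance : NormedSpace ℝ ↥(Lip0 M z) where
  norm_smul_le c f := by
    have : lipConst ((c • f : ↥(Lip0 M z)) : M → ℝ) ≤ ‖c‖₊ * lipConst (f : M → ℝ) :=
      lipConst_le (lipschitzWith_smul (Lip0.lipschitzWith f) c)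
    calc ‖c • f‖ = ((lipConst ((c • f : ↥(Lip0 M z)) : M → ℝ) : ℝ≥0) : ℝ) := rfl
      _ ≤ ((‖c‖₊ * lipConst (f : M → ℝ) : ℝ≥0) : ℝ) := by exact_mod_cast this
      _ = ‖c‖ * ‖f‖ := by push_cast [Lip0.norm_def]; rfl

variable (M z) in
/-- The evaluation functional `δ_x ∈ Lip₀(M)*`. -/
def evalδ (x : M) : NormedSpace.Dual ℝ ↥(Lip0 M z) :=
  LinearMap.mkContinuous
    ({ toFun := fun f => (f : M → ℝ) x
       map_add' := fun f g => rfl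
       map_smul' := fun c f => rfl } : ↥(Lip0 M z) →ₗ[ℝ] ℝ)
    (dist x z)
    (by
      intro f
      have := (Lip0.lipschitzWith f).dist_le_mul x z
      simp only [f.2.2, Real.dist_eq, sub_zero] at this
      calc ‖(f : M → ℝ) x‖ = |(f : M → ℝ) x - 0| := by simp
        _ ≤ (lipConst (f : M → ℝ) : ℝ) * dist x z := by
            simpa [f.2.2, Real.dist_eq] using (Lip0.lipschitzWith f).dist_le_mul x z
        _ = dist x z * ‖f‖ := by rw [Lip0.norm_def, mul_comm])

variable (M z) in
/-- The Lipschitz-free space over `M`: the closed linear span of the evaluation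
functionals inside `Lip₀(M)*`. -/
def FreeSpace : Submodule ℝ (NormedSpace.Dual ℝ ↥(Lip0 M z)) :=
  (Submodule.span ℝ (Set.range (evalδ M z))).topologicalClosure

variable (M z) in
/-- The molecule `m_{x y} = (δ_x - δ_y)/d(x,y)` as an element of `Lip₀(M)*`. -/
def molecule (x y : M) : NormedSpace.Dual ℝ ↥(Lip0 M z) :=
  (dist x y)⁻¹ • (evalδ M z x - evalδ M z y)

theorem molecule_mem_freeSpace (x y : M) : molecule M z x y ∈ FreeSpace M z :=
  Submodule.le_topologicalClosure _
    (Submodule.smul_mem _ _ (Submodule.sub_mem _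
      (Submodule.subset_span ⟨x, rfl⟩) (Submodule.subset_span ⟨y, rfl⟩)))

variable (M z) in
/-- The molecule `m_{x y}` as an element of the free space `F(M)`. -/
def mol (x y : M) : ↥(FreeSpace M z) := ⟨molecule M z x y, molecule_mem_freeSpace x y⟩

variable (M) in
/-- A metric space is uniformly discrete if distances between distinct points are
bounded below by a positive constant. -/
def UniformlyDiscrete : Prop := ∃ θ > (0:ℝ), ∀ x y : M, x ≠ y → θ ≤ dist x y

/-- A norm-one Lipschitz function is local if its Lipschitz constant is approximated
on pairs of arbitrarily close points. -/
def IsLocal (f : ↥(Lip0 M z)) : Prop :=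
  ∀ ε > 0, ∃ u v : M, u ≠ v ∧
    ‖f‖ - ε < ((f : M → ℝ) u - (f : M → ℝ) v) / dist u v ∧ dist u v < ε

/-- `f ∈ S_{Lip₀(M)}` is a w*-Daugavet-point: for every w*-slice `S(μ, α)` of
`B_{Lip₀(M)}` (`μ` a norm-one element of `F(M)`) and every `ε > 0` there is `g` in the
slice with `‖f - g‖ ≥ 2 - ε`. -/
def IsLipWeakStarDaugavetPoint (f : ↥(Lip0 M z)) : Prop :=
  ∀ μ : NormedSpace.Dual ℝ ↥(Lip0 M z), μ ∈ FreeSpace M z → ‖μ‖ = 1 → ∀ α > (0:ℝ), ∀ ε > (0:ℝ),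
    ∃ g : ↥(Lip0 M z), ‖g‖ ≤ 1 ∧ 1 - α < μ g ∧ 2 - ε ≤ ‖f - g‖

/-- `f ∈ S_{Lip₀(M)}` is a w*-Δ-point: the same as above, but only for w*-slices
containing `f`. -/
def IsLipWeakStarDeltaPoint (f : ↥(Lip0 M z)) : Prop :=
  ∀ μ : NormedSpace.Dual ℝ ↥(Lip0 M z), μ ∈ FreeSpace M z → ‖μ‖ = 1 → ∀ α > (0:ℝ),
    1 - α < μ f → ∀ ε > (0:ℝ),
    ∃ g : ↥(Lip0 M z), ‖g‖ ≤ 1 ∧ 1 - α < μ g ∧ 2 - ε ≤ ‖f - g‖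

end DeltaPaper

open DeltaPaper

/-!
Let `a` be the supremum of those `t` for which distinct points outside some finite set are at
distance `≥ t`; it is positive by uniform discreteness and finite by boundedness. For `t < a`
such a finite set `F` exists, and since a point lies within `t / 2` of at most one point outside
`F`, enlarging `F` by finitely many points makes every point outside it `t / 2`-isolated.
As `a` is a supremum, outside every finite set there are pairs at distance `< a + ε`; taking
`u_i, v_i` to be a fresh such pair outside the sets for `t = a (k - 1) / k`, `k ≤ i`, gives all
the estimates.
-/

theorem exists_seq_pair_fresh {α : Type*} (R : ℕ → α → α → Prop)
    (h : ∀ n (E : Finset α), ∃ x ∉ E, ∃ y ∉ E, x ≠ y ∧ R n x y) :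
    ∃ u v : ℕ → α, (∀ n, R n (u n) (v n)) ∧
      Function.Injective u ∧ Function.Injective v ∧ ∀ m n, u m ≠ v n := by
  classical
  choose x hx y hy hxy hR using h
  let used : ℕ → Finset α := fun n =>
    Nat.rec ∅ (fun k E => insert (x k E) (insert (y k E) E)) n
  have hmono : Monotone used :=
    monotone_nat_of_le_succ fun k => (Finset.subset_insert _ _).trans (Finset.subset_insert _ _)
  have hx_mem {m n} (hmn : m < n) : x m (used m) ∈ used n :=
    hmono hmn (Finset.mem_insert_self _ _)
  have hy_mem {m n} (hmn : m < n) : y m (used m) ∈ used n :=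
    hmono hmn (Finset.mem_insert_of_mem (Finset.mem_insert_self _ _))
  refine ⟨fun n => x n (used n), fun n => y n (used n), fun n => hR n _,
    .of_lt_imp_ne fun m n hmn => ne_of_mem_of_not_mem (hx_mem hmn) (hx n _),
    .of_lt_imp_ne fun m n hmn => ne_of_mem_of_not_mem (hy_mem hmn) (hy n _),
    fun m n => ?_⟩
  rcases lt_trichotomy m n with hmn | rfl | hmn
  · exact ne_of_mem_of_not_mem (hx_mem hmn) (hy n _)
  · exact hxy m _
  · exact (ne_of_mem_of_not_mem (hy_mem hmn) (hx m _)).symm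

theorem mul_sub_one_div_lt_self {a : ℝ} (ha : 0 < a) (n : ℕ) : a * ((n : ℝ) - 1) / n < a := by
  rcases n.eq_zero_or_pos with rfl | hn
  · simpa using ha
  · rw [div_lt_iff₀ (by positivity)]
    nlinarith

theorem add_div_add_one_le_mul_add_one_div {a : ℝ} (ha : 0 ≤ a) {n : ℕ} (hn : 1 ≤ n) :
    a + a / (n + 1) ≤ a * ((n : ℝ) + 1) / n := by
  have hn' : (1 : ℝ) ≤ n := by exact_mod_cast hn
  calc a + a / (n + 1) ≤ a + a / n := by gcongr; linarith
    _ = a * ((n : ℝ) + 1) / n := by field_simp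

namespace DeltaPaper

section EventualSeparation

variable (M : Type*) [PseudoMetricSpace M]

def IsEventuallySeparated (t : ℝ) : Prop :=
  ∃ F : Finset M, ∀ x ∉ F, ∀ y ∉ F, x ≠ y → t ≤ dist x y

def eventualSeparation : ℝ :=
  sSup {t | IsEventuallySeparated M t}

variable {M}

theorem isEventuallySeparated_zero : IsEventuallySeparated M 0 :=
  ⟨∅, fun _ _ _ _ _ => dist_nonneg⟩

theorem IsEventuallySeparated.mono {s t : ℝ} (ht : IsEventuallySeparated M t) (hst : s ≤ t) :
    IsEventuallySeparated M s :=
  let ⟨F, hF⟩ := ht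
  ⟨F, fun x hx y hy hxy => hst.trans (hF x hx y hy hxy)⟩

theorem isEventuallySeparated_of_lt_eventualSeparation {t : ℝ}
    (ht : t < eventualSeparation M) : IsEventuallySeparated M t := by
  obtain ⟨s, hs, hts⟩ := exists_lt_of_lt_csSup ⟨0, isEventuallySeparated_zero⟩ ht
  exact IsEventuallySeparated.mono hs hts.le

theorem bddAbove_setOf_isEventuallySeparated [Infinite M]
    (hb : Bornology.IsBounded (Set.univ : Set M)) :
    BddAbove {t | IsEventuallySeparated M t} := by
  obtain ⟨C, hC⟩ := Metric.isBounded_iff.mp hb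
  refine ⟨C, fun t ⟨F, hF⟩ => ?_⟩
  obtain ⟨x, hx, y, hy, hxy⟩ := F.finite_toSet.infinite_compl.nontrivial
  exact (hF x hx y hy hxy).trans (hC (mem_univ x) (mem_univ y))

theorem exists_dist_lt_of_eventualSeparation_lt [Infinite M]
    (hb : Bornology.IsBounded (Set.univ : Set M)) {t : ℝ} (ht : eventualSeparation M < t)
    (E : Finset M) : ∃ x ∉ E, ∃ y ∉ E, x ≠ y ∧ dist x y < t := by
  by_contra! h
  exact ht.not_ge (le_csSup (bddAbove_setOf_isEventuallySeparated hb) ⟨E, h⟩)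

theorem UniformlyDiscrete.eventualSeparation_pos [Infinite M]
    (hb : Bornology.IsBounded (Set.univ : Set M)) (hud : UniformlyDiscrete M) :
    0 < eventualSeparation M := by
  obtain ⟨θ, hθ, hsep⟩ := hud
  exact hθ.trans_le (le_csSup (bddAbove_setOf_isEventuallySeparated hb)
    ⟨∅, fun x _ y _ hxy => hsep x y hxy⟩)

theorem IsEventuallySeparated.exists_finset_half_le_dist {t : ℝ}
    (ht : IsEventuallySeparated M t) :
    ∃ F : Finset M, (∀ x ∉ F, ∀ y ∉ F, x ≠ y → t ≤ dist x y) ∧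
      ∀ x ∉ F, ∀ q, q ≠ x → t / 2 ≤ dist x q := by
  classical
  obtain ⟨F₀, hF₀⟩ := ht
  set N := {x | x ∉ F₀ ∧ ∃ p ∈ F₀, dist x p < t / 2}
  have hN : N.Finite := by
    refine (F₀.finite_toSet.biUnion fun p _ => Set.Subsingleton.finite
      (s := {x | x ∉ F₀ ∧ dist x p < t / 2}) ?_).subset ?_
    · rintro x ⟨hx, hxp⟩ y ⟨hy, hyp⟩
      by_contra hxy
      linarith [hF₀ x hx y hy hxy, dist_triangle_right x y p]
    · rintro x ⟨hx, p, hp, hxp⟩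
      exact mem_biUnion (Finset.mem_coe.mpr hp) ⟨hx, hxp⟩
  refine ⟨F₀ ∪ hN.toFinset, fun x hx y hy hxy => ?_, fun x hx q hqx => ?_⟩
  · simp only [Finset.mem_union, not_or] at hx hy
    exact hF₀ x hx.1 y hy.1 hxy
  · simp only [Finset.mem_union, Set.Finite.mem_toFinset, not_or] at hx
    by_cases hq : q ∈ F₀
    · by_contra! hlt
      exact hx.2 ⟨hx.1, q, hq, hlt⟩
    · linarith [hF₀ x hx.1 q hq hqx.symm, dist_nonneg (x := x) (y := q)]

end EventualSeparation

theorem exists_seq_pair_fresh_dist_lt {M : Type*} [PseudoMetricSpace M] [Infinite M]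
    (hb : Bornology.IsBounded (Set.univ : Set M)) (F : ℕ → Finset M) {ε : ℕ → ℝ}
    (hε : ∀ n, 0 < ε n) :
    ∃ u v : ℕ → M,
      (∀ n, dist (u n) (v n) < eventualSeparation M + ε n ∧
        ∀ k ≤ n, u n ∉ F k ∧ v n ∉ F k) ∧
      Function.Injective u ∧ Function.Injective v ∧ ∀ m n, u m ≠ v n := by
  classical
  refine exists_seq_pair_fresh (fun n x y => dist x y < eventualSeparation M + ε n ∧
    ∀ k ≤ n, x ∉ F k ∧ y ∉ F k) fun n E => ?_
  obtain ⟨x, hx, y, hy, hxy, hd⟩ := exists_dist_lt_of_eventualSeparation_lt hb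
    (lt_add_of_pos_right _ (hε n)) (E ∪ (Finset.range (n + 1)).biUnion F)
  simp only [Finset.mem_union, Finset.mem_biUnion, Finset.mem_range, Nat.lt_succ_iff, not_or,
    not_exists, not_and] at hx hy
  exact ⟨x, hx.1, y, hy.1, hxy, hd, fun k hk => ⟨hx.2 k hk, hy.2 k hk⟩⟩

end DeltaPaper

/-- Lemma 5.6. If `M` is infinite, bounded and uniformly discrete, then
there are `a > 0` and sequences `(u_i)_{i ≥ 1}`, `(v_i)_{i ≥ 1}` of pairwise distinct points
such that `a(i-1)/i ≤ d(u_i,v_i) ≤ a(i+1)/i`, `min{d(u_i,p), d(v_i,p)} ≥ a(i-1)/i` for every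
`p ∈ {u_j, v_j : j > i}`, and `min{d(u_i,q), d(v_i,q)} ≥ a(i-1)/(2i)` for every
`q ∈ M \ {u_i, v_i}`. -/
theorem statement18 {M : Type*} [MetricSpace M] [Infinite M]
    (hb : Bornology.IsBounded (Set.univ : Set M)) (hud : UniformlyDiscrete M) :
    ∃ a > (0:ℝ), ∃ u v : ℕ → M,
      (∀ i j : ℕ, 1 ≤ i → 1 ≤ j → u i ≠ v j) ∧
      (∀ i j : ℕ, 1 ≤ i → 1 ≤ j → i ≠ j → u i ≠ u j ∧ v i ≠ v j) ∧
      (∀ i : ℕ, 1 ≤ i →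
        a * ((i : ℝ) - 1) / i ≤ dist (u i) (v i) ∧
        dist (u i) (v i) ≤ a * ((i : ℝ) + 1) / i) ∧
      (∀ i : ℕ, 1 ≤ i → ∀ j : ℕ, i < j →
        a * ((i : ℝ) - 1) / i ≤ min (dist (u i) (u j)) (dist (v i) (u j)) ∧
        a * ((i : ℝ) - 1) / i ≤ min (dist (u i) (v j)) (dist (v i) (v j))) ∧
      (∀ i : ℕ, 1 ≤ i → ∀ q : M, q ≠ u i → q ≠ v i →
        a * ((i : ℝ) - 1) / (2 * i) ≤ min (dist (u i) q) (dist (v i) q)) := by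
  set a := eventualSeparation M
  have ha : 0 < a := hud.eventualSeparation_pos hb
  choose F hFsep hFhalf using fun n : ℕ =>
    (isEventuallySeparated_of_lt_eventualSeparation
      (mul_sub_one_div_lt_self ha n)).exists_finset_half_le_dist
  obtain ⟨u, v, hdist, hu, hv, huv⟩ :=
    exists_seq_pair_fresh_dist_lt hb F (ε := fun n => a / (n + 1)) fun n => by positivity
  have hout {i j} (hij : i ≤ j) : u j ∉ F i ∧ v j ∉ F i := (hdist j).2 i hij
  refine ⟨a, ha, u, v, fun i j _ _ => huv i j, fun i j _ _ hij => ⟨hu.ne hij, hv.ne hij⟩,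
    fun i hi => ⟨?_, ?_⟩, fun i _ j hij => ?_, fun i _ q hqu hqv => ?_⟩
  · exact hFsep i _ (hout le_rfl).1 _ (hout le_rfl).2 (huv i i)
  · exact (hdist i).1.le.trans (add_div_add_one_le_mul_add_one_div ha.le hi)
  · obtain ⟨hui, hvi⟩ := hout (le_refl i)
    obtain ⟨huj, hvj⟩ := hout hij.le
    exact ⟨le_min (hFsep i _ hui _ huj (hu.ne hij.ne)) (hFsep i _ hvi _ huj (huv j i).symm),
      le_min (hFsep i _ hui _ hvj (huv i j)) (hFsep i _ hvi _ hvj (hv.ne hij.ne))⟩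
  · rw [show a * ((i : ℝ) - 1) / (2 * i) = a * ((i : ℝ) - 1) / i / 2 by ring]
    exact le_min (hFhalf i _ (hout le_rfl).1 q hqu) (hFhalf i _ (hout le_rfl).2 q hqv)
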